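/- Let A ∈ ℝ^{m×n} and let (y, z) be a normalized singular vector pair corresponding to the largest singular value λ_max(A), i.e., ‖y‖ = ‖z‖ = 1, Az = λ_max(A)·y and Aᵀy = λ_max(A)·z. Let z⁰ = z_r/‖z_r‖ where z_r is the truncation of z to its r largest-in-magnitude entries (1 ≤ r ≤ n, assuming z_r ≠ 0). Then ‖A z⁰‖ ≥ √(r/n)·λ_max(A). -/

import Mathlib

/- Let `c = ‖z_r‖` and `z⁰ = z_r / c`. Since `z_r` keeps the `r` largest entries of the unit vector `z`,
it carries at least the fraction `r / n` of its energy, so `c ≥ √(r/n)`. Pairing `A z⁰` with `y` and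
moving `A` across gives `⟨y, A z⁰⟩ = ⟨Aᵀ y, z⁰⟩ = λ ⟨z, z_r⟩ / c = λ c`, and Cauchy–Schwarz with
`‖y‖ = 1` yields `‖A z⁰‖ ≥ λ c ≥ √(r/n) λ`. -/

open Finset

noncomputable def enorm₂ {ι : Type*} [Fintype ι] (x : ι → ℝ) : ℝ :=
  Real.sqrt (∑ i, x i ^ 2)

def dot {ι : Type*} [Fintype ι] (x y : ι → ℝ) : ℝ := ∑ i, x i * y i

noncomputable def l0 {ι : Type*} [Fintype ι] (x : ι → ℝ) : ℕ :=
  (Finset.univ.filter fun i => x i ≠ 0).card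

def IsTrunc {ι : Type*} [Fintype ι] [DecidableEq ι] (a : ι → ℝ) (r : ℕ) (ar : ι → ℝ) : Prop :=
  ∃ S : Finset ι, S.card = r ∧ (∀ i ∈ S, ar i = a i) ∧ (∀ i ∉ S, ar i = 0) ∧
    ∀ i ∈ S, ∀ j ∉ S, |a j| ≤ |a i|

noncomputable def lmax {m n' : Type*} [Fintype m] [Fintype n'] (A : Matrix m n' ℝ) : ℝ :=
  sSup {c | ∃ x : n' → ℝ, enorm₂ x = 1 ∧ c = enorm₂ (A.mulVec x)}

noncomputable def fnorm {m n' : Type*} [Fintype m] [Fintype n'] (A : Matrix m n' ℝ) : ℝ :=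
  Real.sqrt (∑ i, ∑ j, A i j ^ 2)

def tri {n1 n2 n3 : ℕ} (A : Fin n1 → Fin n2 → Fin n3 → ℝ)
    (x : Fin n1 → ℝ) (y : Fin n2 → ℝ) (z : Fin n3 → ℝ) : ℝ :=
  ∑ i, ∑ j, ∑ k, A i j k * x i * y j * z k

def mlin {d : ℕ} {n : Fin d → ℕ} (A : (∀ j, Fin (n j)) → ℝ)
    (x : ∀ j, Fin (n j) → ℝ) : ℝ :=
  ∑ i, A i * ∏ j, x j (i j)

open Matrix

lemma enorm₂_sq {ι : Type*} [Fintype ι] (x : ι → ℝ) : enorm₂ x ^ 2 = ∑ i, x i ^ 2 :=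
  Real.sq_sqrt (sum_nonneg fun i _ => sq_nonneg (x i))

lemma dotProduct_le_enorm₂_mul_enorm₂ {ι : Type*} [Fintype ι] (x y : ι → ℝ) :
    x ⬝ᵥ y ≤ enorm₂ x * enorm₂ y :=
  Real.sum_mul_le_sqrt_mul_sqrt univ x y

namespace IsTrunc

variable {ι : Type*} [Fintype ι] [DecidableEq ι] {a ar : ι → ℝ} {r : ℕ}

lemma dotProduct_eq_enorm₂_sq (h : IsTrunc a r ar) : a ⬝ᵥ ar = enorm₂ ar ^ 2 := by
  obtain ⟨S, -, hin, hout, -⟩ := h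
  rw [enorm₂_sq, dotProduct]
  refine sum_congr rfl fun i _ => ?_
  by_cases hi : i ∈ S
  · rw [hin i hi]; ring
  · rw [hout i hi]; ring

lemma card_mul_sum_sq_le (h : IsTrunc a r ar) :
    (r : ℝ) * ∑ i, a i ^ 2 ≤ Fintype.card ι * ∑ i, ar i ^ 2 := by
  obtain ⟨S, hcard, hin, hout, hlarge⟩ := h
  have htrunc : ∑ i, ar i ^ 2 = ∑ i ∈ S, a i ^ 2 := by
    rw [← sum_subset (subset_univ S) fun i _ hi => by rw [hout i hi]; ring]
    exact sum_congr rfl fun i hi => by rw [hin i hi]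
  have hsmall : ∀ j ∈ Sᶜ, (r : ℝ) * a j ^ 2 ≤ ∑ i ∈ S, a i ^ 2 := fun j hj => by
    rw [← hcard, ← nsmul_eq_mul, ← sum_const]
    exact sum_le_sum fun i hi => sq_le_sq.mpr (hlarge i hi j (mem_compl.mp hj))
  have htail : (r : ℝ) * ∑ j ∈ Sᶜ, a j ^ 2 ≤ (Sᶜ.card : ℝ) * ∑ i ∈ S, a i ^ 2 := by
    rw [mul_sum, ← nsmul_eq_mul, ← sum_const]
    exact sum_le_sum hsmall
  have hcompl : (Sᶜ.card : ℝ) + r = Fintype.card ι := by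
    rw [← hcard]; exact_mod_cast card_compl_add_card S
  rw [← sum_add_sum_compl S, htrunc, ← hcompl]
  linarith

lemma sqrt_div_card_le_enorm₂ (h : IsTrunc a r ar) (ha : enorm₂ a = 1) :
    Real.sqrt ((r : ℝ) / Fintype.card ι) ≤ enorm₂ ar := by
  have hsum : ∑ i, a i ^ 2 = 1 := by rw [← enorm₂_sq, ha, one_pow]
  have hbound := h.card_mul_sum_sq_le
  rw [hsum, mul_one, ← enorm₂_sq] at hbound
  refine Real.sqrt_le_iff.mpr ⟨Real.sqrt_nonneg _, ?_⟩
  rcases (Nat.cast_nonneg (α := ℝ) (Fintype.card ι)).eq_or_lt with hn | hn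
  · rw [← hn, div_zero]; positivity
  · rwa [div_le_iff₀ hn, mul_comm]

end IsTrunc

theorem stmt_3_general {m n : ℕ} (A : Matrix (Fin m) (Fin n) ℝ)
    (y : Fin m → ℝ) (z : Fin n → ℝ)
    (hy : enorm₂ y = 1) (hz : enorm₂ z = 1)
    (hAty : A.transpose.mulVec y = fun j => lmax A * z j)
    (r : ℕ)
    (zr : Fin n → ℝ) (htr : IsTrunc z r zr) :
    enorm₂ (A.mulVec (fun j => zr j / enorm₂ zr)) ≥ Real.sqrt ((r : ℝ) / n) * lmax A := by
  set c := enorm₂ zr with hc_def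
  set v : Fin n → ℝ := fun j => zr j / c
  rcases le_or_gt (lmax A) 0 with hL | hL
  · exact (mul_nonpos_of_nonneg_of_nonpos (Real.sqrt_nonneg _) hL).trans (Real.sqrt_nonneg _)
  have hc : Real.sqrt ((r : ℝ) / n) ≤ c := by
    simpa using htr.sqrt_div_card_le_enorm₂ hz
  have hpair : y ⬝ᵥ A *ᵥ v = lmax A * c := by
    have hv : v = c⁻¹ • zr := funext fun j => div_eq_inv_mul _ _
    have hAty' : Aᵀ *ᵥ y = lmax A • z := hAty
    -- `c * c / c = c` holds also for `c = 0`, since `0 / 0 = 0`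
    rw [dotProduct_mulVec, ← mulVec_transpose, hAty', hv, dotProduct_smul, smul_dotProduct,
      htr.dotProduct_eq_enorm₂_sq, ← hc_def, smul_eq_mul, smul_eq_mul, mul_left_comm,
      inv_mul_eq_div, sq, mul_self_div_self]
  calc Real.sqrt ((r : ℝ) / n) * lmax A ≤ c * lmax A := mul_le_mul_of_nonneg_right hc hL.le
    _ = lmax A * c := mul_comm _ _
    _ = y ⬝ᵥ A *ᵥ v := hpair.symm
    _ ≤ enorm₂ (A *ᵥ v) := by
        simpa [hy] using dotProduct_le_enorm₂_mul_enorm₂ y (A *ᵥ v)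

/-- Lemma 3.2: for a normalized leading singular vector pair (y,z) of A and
z⁰ the normalized r-truncation of z, ‖A z⁰‖ ≥ √(r/n)·λ_max(A). -/
theorem stmt_3 {m n : ℕ} (A : Matrix (Fin m) (Fin n) ℝ)
    (y : Fin m → ℝ) (z : Fin n → ℝ)
    (hy : enorm₂ y = 1) (hz : enorm₂ z = 1)
    (hAz : A.mulVec z = fun i => lmax A * y i)
    (hAty : A.transpose.mulVec y = fun j => lmax A * z j)
    (r : ℕ) (hr1 : 1 ≤ r) (hrn : r ≤ n)
    (zr : Fin n → ℝ) (htr : IsTrunc z r zr) (hzr : zr ≠ 0) :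
    enorm₂ (A.mulVec (fun j => zr j / enorm₂ zr)) ≥ Real.sqrt ((r : ℝ) / n) * lmax A :=
  stmt_3_general A y z hy hz hAty r zr htr
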